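/- arXiv:2102.12232 — 4 statements merged into one kernel-verified Lean document; each statement's English description precedes it below -/
import Mathlib

section
/- Let p(x, y) be a real polynomial in two variables, viewed as a binary operation x ∗ y := p(x, y) on ℝ. If ∗ is associative, then p has degree at most 1 in each variable, i.e., p(x, y) = α + βx + γy + δxy for some real α, β, γ, δ. -/
/-!
For fixed `y`, the map `x ↦ x ∗ y` is a polynomial `P_y` whose degree is bounded independently
of `y`. Associativity says `P_y ∘ P_y = P_{y ∗ y}`, so if `n` is the largest degree of the `P_y`,
attained at `y`, then `n * n = deg (P_y ∘ P_y) ≤ n`, whence `n ≤ 1`. Thus `∗` is affine in its left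
argument, and by the same argument for the opposite operation also in its right argument; a
separately affine function of two variables has the form `α + β x + γ y + δ x y`.
-/

/-- Evaluation of a two-variable real polynomial at `(x, y)`. -/
noncomputable def ev2 (p : MvPolynomial (Fin 2) ℝ) (x y : ℝ) : ℝ :=
  MvPolynomial.eval ![x, y] p

open Polynomial

theorem Polynomial.natDegree_le_one_of_comp_self {R ι : Type*} [CommRing R] [NoZeroDivisors R]
    (P : ι → R[X]) (hbdd : BddAbove (Set.range fun i => (P i).natDegree))
    (hcomp : ∀ i, ∃ j, (P i).comp (P i) = P j) (i : ι) : (P i).natDegree ≤ 1 := by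
  set n := sSup (Set.range fun i => (P i).natDegree)
  obtain ⟨k, hk⟩ : n ∈ Set.range fun i => (P i).natDegree := Nat.sSup_mem ⟨_, i, rfl⟩ hbdd
  obtain ⟨j, hj⟩ := hcomp k
  have hsq : n * n ≤ n :=
    calc n * n = ((P k).comp (P k)).natDegree := by rw [natDegree_comp, ← hk]
      _ = (P j).natDegree := by rw [hj]
      _ ≤ n := le_csSup hbdd ⟨j, rfl⟩
  exact (le_csSup hbdd ⟨i, rfl⟩).trans (by nlinarith)

theorem exists_biaffine_of_affine_left_of_affine_right {R : Type*} [CommRing R] (f : R → R → R)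
    (hleft : ∀ y, ∃ a b, ∀ x, f x y = a + b * x) (hright : ∀ x, ∃ c d, ∀ y, f x y = c + d * y) :
    ∃ α β γ δ, ∀ x y, f x y = α + β * x + γ * y + δ * (x * y) := by
  obtain ⟨c₀, d₀, h₀⟩ := hright 0
  obtain ⟨c₁, d₁, h₁⟩ := hright 1
  refine ⟨c₀, c₁ - c₀, d₀, d₁ - d₀, fun x y => ?_⟩
  obtain ⟨a, b, hab⟩ := hleft y
  have ha : a = c₀ + d₀ * y := by simpa using (hab 0).symm.trans (h₀ y)
  have hb : a + b = c₁ + d₁ * y := by simpa using (hab 1).symm.trans (h₁ y)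
  linear_combination hab x + (1 - x) * ha + x * hb

namespace MvPolynomial

variable {R : Type*} [CommRing R]

theorem eval_rename_swap (p : MvPolynomial (Fin 2) R) (x y : R) :
    eval ![x, y] (rename (Equiv.swap 0 1) p) = eval ![y, x] p := by
  have hswap : ![x, y] ∘ Equiv.swap 0 1 = ![y, x] := by
    funext i
    fin_cases i <;> rfl
  rw [eval_rename, hswap]

noncomputable def leftSection (p : MvPolynomial (Fin 2) R) (y : R) : R[X] :=
  aeval ![(Polynomial.X : R[X]), Polynomial.C y] p

theorem eval_leftSection (p : MvPolynomial (Fin 2) R) (x y : R) :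
    (leftSection p y).eval x = eval ![x, y] p := by
  rw [leftSection, ← Polynomial.coe_aeval_eq_eval, comp_aeval_apply, aeval_eq_eval]
  congr 2
  funext i
  fin_cases i <;> simp

theorem leftSection_eq_map (p : MvPolynomial (Fin 2) R) (y : R) :
    leftSection p y =
      (aeval ![(Polynomial.X : R[X][X]), Polynomial.C Polynomial.X] p).map (evalRingHom y) := by
  induction p using MvPolynomial.induction_on with
  | C a => simp [leftSection]
  | add p q hp hq => simp_all [leftSection]
  | mul_X p i hp => fin_cases i <;> simp_all [leftSection]

theorem bddAbove_natDegree_leftSection (p : MvPolynomial (Fin 2) R) :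
    BddAbove (Set.range fun y => (leftSection p y).natDegree) :=
  ⟨(aeval ![(Polynomial.X : R[X][X]), Polynomial.C Polynomial.X] p).natDegree, by
    rintro _ ⟨y, rfl⟩
    show (leftSection p y).natDegree ≤ _
    rw [leftSection_eq_map]
    exact natDegree_map_le⟩

variable [IsDomain R] [Infinite R]

theorem leftSection_comp_self (p : MvPolynomial (Fin 2) R)
    (hassoc : Std.Associative fun x y => eval ![x, y] p) (y : R) :
    (leftSection p y).comp (leftSection p y) = leftSection p (eval ![y, y] p) :=
  Polynomial.funext fun x => by
    simp only [Polynomial.eval_comp, eval_leftSection]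
    exact hassoc.assoc x y y

theorem exists_affine_left_of_associative (p : MvPolynomial (Fin 2) R)
    (hassoc : Std.Associative fun x y => eval ![x, y] p) (y : R) :
    ∃ a b, ∀ x, eval ![x, y] p = a + b * x := by
  have hdeg := natDegree_le_one_of_comp_self (leftSection p) (bddAbove_natDegree_leftSection p)
    (fun y => ⟨_, leftSection_comp_self p hassoc y⟩) y
  refine ⟨(leftSection p y).coeff 0, (leftSection p y).coeff 1, fun x => ?_⟩
  rw [← eval_leftSection]
  conv_lhs => rw [eq_X_add_C_of_natDegree_le_one hdeg]
  simp only [Polynomial.eval_add, Polynomial.eval_mul, Polynomial.eval_C, Polynomial.eval_X]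
  ring

end MvPolynomial

open MvPolynomial in
theorem stmt_7 (p : MvPolynomial (Fin 2) ℝ)
    (hassoc : ∀ x y z : ℝ, ev2 p (ev2 p x y) z = ev2 p x (ev2 p y z)) :
    ∃ α β γ δ : ℝ, ∀ x y : ℝ, ev2 p x y = α + β * x + γ * y + δ * (x * y) := by
  have hp : Std.Associative fun x y => eval ![x, y] p := ⟨hassoc⟩
  have hswap : Std.Associative fun x y => eval ![x, y] (rename (Equiv.swap 0 1) p) :=
    ⟨fun x y z => by simpa only [ev2, eval_rename_swap] using (hassoc z y x).symm⟩
  refine exists_biaffine_of_affine_left_of_affine_right (ev2 p)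
    (exists_affine_left_of_associative p hp) fun x => ?_
  simpa only [ev2, eval_rename_swap] using exists_affine_left_of_associative _ hswap x
end

section
/- Let p(x, y) = α + β(x + y) + γxy with real coefficients α, β, γ, viewed as a binary operation on ℝ. Then p is associative if and only if αγ = β(β − 1). -/
theorem stmt_8 (α β γ : ℝ) :
    (∀ x y z : ℝ,
        (α + β * ((α + β * (x + y) + γ * (x * y)) + z) + γ * ((α + β * (x + y) + γ * (x * y)) * z)) =
        (α + β * (x + (α + β * (y + z) + γ * (y * z))) + γ * (x * (α + β * (y + z) + γ * (y * z)))))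
    ↔ α * γ = β * (β - 1) := by
  constructor
  · intro h
    have h1 := h 1 0 0
    have h2 := h 0 0 1
    have h3 := h 1 1 0
    have h4 := h 0 1 1
    nlinarith [h 1 2 3, h 0 0 0, sq_nonneg β, sq_nonneg γ]
  · intro h x y z
    linear_combination (z - x) * h
end

section
/- A symmetric real polynomial p(x, y) in two variables defines an associative binary operation on ℝ if and only if p is of one of the forms: p(x, y) = α (constant), p(x, y) = α + x + y, or p(x, y) = β(β−1)/γ + β(x + y) + γxy with γ ≠ 0, for some real constants α, β, γ. -/
open Polynomial

section CommRing

variable {R : Type*} [CommRing R]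

theorem exists_eq_add_mul_of_symm_of_affine {f : R → R → R} (hsymm : ∀ x y, f x y = f y x)
    {a b : R → R} (haff : ∀ x y, f x y = a y * x + b y) :
    ∃ α β γ : R, ∀ x y, f x y = α + β * (x + y) + γ * (x * y) := by
  have hb (y : R) : b y = a 0 * y + b 0 := by
    simpa [haff] using hsymm 0 y
  have ha (x : R) : a x = (a 1 - a 0) * x + a 0 := by
    have h := hsymm x 1
    rw [haff, haff, hb x, hb 1] at h
    linear_combination -h
  exact ⟨b 0, a 0, a 1 - a 0, fun x y => by rw [haff, ha, hb]; ring⟩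

/-- The associator of `α + β (x + y) + γ x y` is `(β² - β - αγ)(x - z)`. -/
theorem assoc_iff_of_eq_add_mul {f : R → R → R} {α β γ : R}
    (hf : ∀ x y, f x y = α + β * (x + y) + γ * (x * y)) :
    (∀ x y z, f (f x y) z = f x (f y z)) ↔ β * β = β + α * γ := by
  simp only [hf]
  refine ⟨fun h => ?_, fun h x y z => by linear_combination (x - z) * h⟩
  linear_combination h 1 0 0

end CommRing

theorem exists_eq_add_mul_and_mul_self_eq_iff {K : Type*} [Field K] (f : K → K → K) :
    (∃ α β γ : K, (∀ x y, f x y = α + β * (x + y) + γ * (x * y)) ∧ β * β = β + α * γ) ↔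
      ((∃ α : K, ∀ x y : K, f x y = α) ∨
       (∃ α : K, ∀ x y : K, f x y = α + x + y) ∨
       (∃ β γ : K, γ ≠ 0 ∧ ∀ x y : K,
          f x y = β * (β - 1) / γ + β * (x + y) + γ * (x * y))) := by
  constructor
  · rintro ⟨α, β, γ, hf, hrel⟩
    by_cases hγ : γ = 0
    · subst hγ
      have : β * (β - 1) = 0 := by linear_combination hrel
      rcases mul_eq_zero.1 this with hβ | hβ
      · exact Or.inl ⟨α, fun x y => by rw [hf, hβ]; ring⟩
      · exact Or.inr <| Or.inl ⟨α, fun x y => by rw [hf, sub_eq_zero.1 hβ]; ring⟩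
    · have hα : α = β * (β - 1) / γ := by field_simp; linear_combination -hrel
      exact Or.inr <| Or.inr ⟨β, γ, hγ, fun x y => by rw [hf, hα]⟩
  · rintro (⟨α, hf⟩ | ⟨α, hf⟩ | ⟨β, γ, hγ, hf⟩)
    · exact ⟨α, 0, 0, fun x y => by rw [hf]; ring, by ring⟩
    · exact ⟨α, 1, 0, fun x y => by rw [hf]; ring, by ring⟩
    · exact ⟨_, β, γ, hf, by field_simp; ring⟩

section Domain

variable {R : Type*} [CommRing R] [IsDomain R] [Infinite R]

theorem Polynomial.exists_natDegree_map_eval_eq {σ : Type*} (Q : (MvPolynomial σ R)[X]) :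
    ∃ s : σ → R, (Q.map (MvPolynomial.eval s)).natDegree = Q.natDegree := by
  rcases eq_or_ne Q 0 with rfl | hQ
  · simp
  obtain ⟨s, hs⟩ : ∃ s : σ → R, MvPolynomial.eval s Q.leadingCoeff ≠ 0 := by
    by_contra! h
    exact leadingCoeff_ne_zero.2 hQ (MvPolynomial.funext fun s => by simp [h s])
  exact ⟨s, natDegree_map_of_leadingCoeff_ne_zero _ hs⟩

theorem natDegree_le_one_of_assoc {f : R → R → R} (hassoc : ∀ x y z, f (f x y) z = f x (f y z))
    {P : R → R[X]} (hP : ∀ x y, f x y = (P y).eval x) {y₀ : R}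
    (hmax : ∀ y, (P y).natDegree ≤ (P y₀).natDegree) (y : R) : (P y).natDegree ≤ 1 := by
  have hcomp : (P y₀).comp (P y₀) = P (f y₀ y₀) :=
    Polynomial.funext fun x => by rw [eval_comp, ← hP, ← hP, ← hP, hassoc]
  have hsq : (P y₀).natDegree * (P y₀).natDegree ≤ (P y₀).natDegree := by
    rw [← natDegree_comp, hcomp]
    exact hmax _
  exact (hmax y).trans (by nlinarith)

theorem MvPolynomial.exists_eval_eq_add_mul_of_symm_of_assoc (p : MvPolynomial (Fin 2) R)
    (hsymm : ∀ x y, eval ![x, y] p = eval ![y, x] p)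
    (hassoc : ∀ x y z, eval ![eval ![x, y] p, z] p = eval ![x, eval ![y, z] p] p) :
    ∃ α β γ : R, ∀ x y, eval ![x, y] p = α + β * (x + y) + γ * (x * y) := by
  set P : R → R[X] := fun y => (finSuccEquiv R 1 p).map (eval ![y])
  have hP (x y : R) : eval ![x, y] p = (P y).eval x := eval_eq_eval_mv_eval' ![y] x p
  obtain ⟨s, hs⟩ := (finSuccEquiv R 1 p).exists_natDegree_map_eval_eq
  have hmax (y : R) : (P y).natDegree ≤ (P (s 0)).natDegree := by
    have : ![s 0] = s := by ext i; fin_cases i; rfl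
    simp only [P, this, hs]
    exact natDegree_map_le
  have hdeg := natDegree_le_one_of_assoc hassoc hP hmax
  refine exists_eq_add_mul_of_symm_of_affine hsymm (a := fun y => (P y).coeff 1)
    (b := fun y => (P y).coeff 0) fun x y => ?_
  conv_lhs => rw [hP, eq_X_add_C_of_natDegree_le_one (hdeg y)]
  simp only [Polynomial.eval_add, Polynomial.eval_mul, Polynomial.eval_C, Polynomial.eval_X]

end Domain

theorem stmt_9 (p : MvPolynomial (Fin 2) ℝ)
    (hsymm : ∀ x y : ℝ, ev2 p x y = ev2 p y x) :
    (∀ x y z : ℝ, ev2 p (ev2 p x y) z = ev2 p x (ev2 p y z)) ↔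
      ((∃ α : ℝ, ∀ x y : ℝ, ev2 p x y = α) ∨
       (∃ α : ℝ, ∀ x y : ℝ, ev2 p x y = α + x + y) ∨
       (∃ β γ : ℝ, γ ≠ 0 ∧ ∀ x y : ℝ,
          ev2 p x y = β * (β - 1) / γ + β * (x + y) + γ * (x * y))) := by
  rw [← exists_eq_add_mul_and_mul_self_eq_iff]
  constructor
  · intro hassoc
    obtain ⟨α, β, γ, hf⟩ := p.exists_eval_eq_add_mul_of_symm_of_assoc hsymm hassoc
    exact ⟨α, β, γ, hf, (assoc_iff_of_eq_add_mul hf).1 hassoc⟩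
  · rintro ⟨α, β, γ, hf, hrel⟩
    exact (assoc_iff_of_eq_add_mul hf).2 hrel
end

section
/- Let (X, ∘) be a commutative semigroup, φ: X → X a bijection, and define f(S) = φ⁻¹(Σ_{x ∈ S} φ(x)) for finite multisets S over X, where Σ is addition in a commutative monoid structure on X. Suppose ‖f(S) − f*(S)‖ < ε for every multiset S of size at most a (a ≥ 2), where f*(S) = ∘-fold of S. If φ is K₁-Lipschitz and φ⁻¹ is K₂-Lipschitz (with K₁K₂ ≥ 1), then for every multiset S of size b ≥ a, ‖f(S) − f*(S)‖ < ε((aK₁K₂)^⌈log_a b⌉ − 1)/(aK₁K₂ − 1). -/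
/-!
Split a multiset of size at most `a ^ (n + 1)` into at most `a` blocks of size at most `a ^ n`.
Since `φ` turns the sum into a sum of block sums, `f(S)` is `f` applied to the multiset of the
block values `f(p)`, while `f*(S)` is `f*` applied to the block values `f*(p)`. Comparing the two
through `φ` and `φ⁻¹` costs a factor `a K₁ K₂` on the block errors, and the outer application of
`f` versus `f*` on at most `a` points adds one more `ε`. Hence the error bounds satisfy
`E (n + 1) = a K₁ K₂ E n + ε`, a geometric sum, and `n = ⌈log_a b⌉` levels suffice.
-/

namespace Multiset

variable {α : Type*}

/-- `Option.merge op` adjoins `none` as a unit to the semigroup, so this fold is additive in `S`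
although `op` itself has no unit. -/
def foldOption (op : α → α → α) [Std.Commutative op] [Std.Associative op] (S : Multiset α) :
    Option α :=
  (S.map some).fold (Option.merge op) none

section foldOption

variable (op : α → α → α) [Std.Commutative op] [Std.Associative op]

@[simp]
theorem foldOption_zero : (0 : Multiset α).foldOption op = none := rfl

theorem foldOption_cons (x : α) (s : Multiset α) :
    (x ::ₘ s).foldOption op = some (s.fold op x) := by
  rw [foldOption, map_cons, fold_cons'_left]
  exact fold_hom op (m := some) (fun _ _ => rfl) x s

theorem foldOption_eq_some_iff {S : Multiset α} {y : α} :
    S.foldOption op = some y ↔ ∃ x s, S = x ::ₘ s ∧ s.fold op x = y := by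
  refine ⟨fun h => ?_, fun ⟨x, s, hS, hy⟩ => by rw [hS, foldOption_cons, hy]⟩
  induction S using Multiset.induction with
  | empty => simp at h
  | cons x s _ => exact ⟨x, s, rfl, Option.some_inj.1 (by rw [← h, foldOption_cons])⟩

theorem foldOption_ne_none {S : Multiset α} (hS : S ≠ 0) : S.foldOption op ≠ none := by
  induction S using Multiset.induction with
  | empty => exact absurd rfl hS
  | cons x s _ => simp [foldOption_cons]

theorem foldOption_add (S T : Multiset α) :
    (S + T).foldOption op = Option.merge op (S.foldOption op) (T.foldOption op) := by
  simpa [foldOption] using fold_add (Option.merge op) none none (S.map some) (T.map some)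

theorem foldOption_sum (P : Multiset (Multiset α)) :
    P.sum.foldOption op = (P.map (foldOption op)).fold (Option.merge op) none := by
  induction P using Multiset.induction with
  | empty => rfl
  | cons p P ih => rw [sum_cons, foldOption_add, ih, map_cons, fold_cons_left]

end foldOption

theorem exists_sum_eq_of_card_le_mul {m : ℕ} :
    ∀ (k : ℕ) (S : Multiset α), card S ≤ k * m →
      ∃ P : Multiset (Multiset α), P.sum = S ∧ card P ≤ k ∧ ∀ p ∈ P, p ≠ 0 ∧ card p ≤ m
  | 0, S, hS => ⟨0, (card_eq_zero.1 (Nat.le_zero.1 (by simpa using hS))).symm, by simp, by simp⟩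
  | k + 1, S, hS => by
    rcases eq_or_ne S 0 with rfl | hS₀
    · exact ⟨0, by simp, by simp, by simp⟩
    have hS_pos : 0 < card S := card_pos.2 hS₀
    have hm : 0 < m := Nat.pos_of_ne_zero fun h => hS₀ (by simpa [h] using hS)
    obtain ⟨t, ht⟩ : ∃ t, t ∈ powersetCard (min m (card S)) S :=
      card_pos_iff_exists_mem.1 <| by
        rw [card_powersetCard]; exact Nat.choose_pos (min_le_right _ _)
    obtain ⟨htS, ht_card⟩ := mem_powersetCard.1 ht
    have ht₀ : t ≠ 0 := card_pos.1 (by omega)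
    have htm : card t ≤ m := by omega
    obtain ⟨u, rfl⟩ := le_iff_exists_add.1 htS
    obtain ⟨P, rfl, hPk, hP⟩ := exists_sum_eq_of_card_le_mul (m := m) k u <| by
      rw [card_add] at hS ht_card; rw [add_one_mul] at hS; omega
    refine ⟨t ::ₘ P, by rw [sum_cons], by simpa using hPk, ?_⟩
    rintro p hp
    rcases mem_cons.1 hp with rfl | hp
    · exact ⟨ht₀, htm⟩
    · exact hP p hp

theorem norm_sum_map_sub_sum_map_le {ι E : Type*} [SeminormedAddCommGroup E] (s : Multiset ι)
    {f g : ι → E} {r : ℝ} (h : ∀ i ∈ s, ‖f i - g i‖ ≤ r) :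
    ‖(s.map f).sum - (s.map g).sum‖ ≤ card s * r := by
  rw [← sum_map_sub]
  calc ‖(s.map fun i => f i - g i).sum‖ ≤ (s.map fun i => ‖f i - g i‖).sum := by
        simpa [map_map] using norm_multiset_sum_le (s.map fun i => f i - g i)
    _ ≤ card s • r := by
        simpa using sum_le_card_nsmul (s.map fun i => ‖f i - g i‖) r (by simpa using h)
    _ = card s * r := nsmul_eq_mul _ _

end Multiset

theorem pos_of_norm_sub_le_mul_norm_sub {E F : Type*} [NormedAddCommGroup E] [Nontrivial E]
    [NormedAddCommGroup F] {f : E → F} (hf : Function.Injective f) {K : ℝ}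
    (h : ∀ x y, ‖f x - f y‖ ≤ K * ‖x - y‖) : 0 < K := by
  obtain ⟨x, y, hxy⟩ := exists_pair_ne E
  have hf_pos : 0 < ‖f x - f y‖ := norm_pos_iff.2 (sub_ne_zero.2 (hf.ne hxy))
  exact pos_of_mul_pos_left (hf_pos.trans_le (h x y)) (norm_nonneg _)

theorem norm_symm_sum_sub_lt_of_card_le_pow {E : Type*} [SeminormedAddCommGroup E]
    {op : E → E → E} [Std.Commutative op] [Std.Associative op] {φ : E ≃ E} {K₁ K₂ ε : ℝ}
    {a : ℕ} (hK₁ : 0 ≤ K₁) (hK₂ : 0 ≤ K₂) (hε : 0 ≤ ε)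
    (hφ : ∀ x y, ‖φ x - φ y‖ ≤ K₁ * ‖x - y‖)
    (hφinv : ∀ x y, ‖φ.symm x - φ.symm y‖ ≤ K₂ * ‖x - y‖)
    (hsmall : ∀ (S : Multiset E) (y : E), S.card ≤ a → S.foldOption op = some y →
      ‖φ.symm (S.map φ).sum - y‖ < ε)
    (n : ℕ) {S : Multiset E} {y : E} (hS : S.card ≤ a ^ (n + 1)) (hy : S.foldOption op = some y) :
    ‖φ.symm (S.map φ).sum - y‖ < ε * ∑ i ∈ Finset.range (n + 1), ((a : ℝ) * K₁ * K₂) ^ i := by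
  induction n generalizing S y with
  | zero => simpa using hsmall S y (by simpa using hS) hy
  | succ n ih =>
    set B := ε * ∑ i ∈ Finset.range (n + 1), ((a : ℝ) * K₁ * K₂) ^ i
    obtain ⟨P, rfl, hPa, hP⟩ :=
      Multiset.exists_sum_eq_of_card_le_mul a S (by rwa [← pow_succ'])
    let f (p : Multiset E) : E := φ.symm (p.map φ).sum
    -- the default `y` is never used, as the blocks are nonempty
    let g (p : Multiset E) : E := (p.foldOption op).getD y
    have hg : ∀ p ∈ P, p.foldOption op = some (g p) := fun p hp =>
      (Option.getD_of_ne_none (Multiset.foldOption_ne_none op (hP p hp).1) y).symm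
    have hT : (P.map g).foldOption op = some y := by
      rw [← hy, Multiset.foldOption_sum, Multiset.foldOption, Multiset.map_map]
      exact congrArg (Multiset.fold _ _) (Multiset.map_congr rfl fun p hp => (hg p hp).symm)
    have hsum : (P.sum.map φ).sum = (P.map fun p => φ (f p)).sum := by
      rw [← Multiset.join, Multiset.map_join, Multiset.sum_join, Multiset.map_map]
      simp [f]
    have hblocks : ‖(P.sum.map φ).sum - ((P.map g).map φ).sum‖ ≤ a * (K₁ * B) := by
      rw [hsum, Multiset.map_map]
      calc _ ≤ P.card * (K₁ * B) := Multiset.norm_sum_map_sub_sum_map_le P fun p hp =>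
              (hφ _ _).trans (by gcongr; exact (ih (hP p hp).2 (hg p hp)).le)
        _ ≤ a * (K₁ * B) := by gcongr
    calc ‖φ.symm (P.sum.map φ).sum - y‖
        ≤ ‖φ.symm (P.sum.map φ).sum - φ.symm ((P.map g).map φ).sum‖ +
            ‖φ.symm ((P.map g).map φ).sum - y‖ := norm_sub_le_norm_sub_add_norm_sub _ _ _
      _ < K₂ * (a * (K₁ * B)) + ε :=
          add_lt_add_of_le_of_lt ((hφinv _ _).trans (mul_le_mul_of_nonneg_left hblocks hK₂))
            (hsmall _ _ (by simpa using hPa) hT)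
      _ = ε * ∑ i ∈ Finset.range (n + 2), ((a : ℝ) * K₁ * K₂) ^ i := by
          rw [geom_sum_succ]; ring

theorem stmt_13 {d : ℕ}
    (op : EuclideanSpace ℝ (Fin d) → EuclideanSpace ℝ (Fin d) → EuclideanSpace ℝ (Fin d))
    [Std.Commutative op] [Std.Associative op]
    (φ : EuclideanSpace ℝ (Fin d) ≃ EuclideanSpace ℝ (Fin d))
    (K₁ K₂ : ℝ) (hK : 1 ≤ K₁ * K₂)
    (hφ : ∀ x y : EuclideanSpace ℝ (Fin d), ‖φ x - φ y‖ ≤ K₁ * ‖x - y‖)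
    (hφinv : ∀ x y : EuclideanSpace ℝ (Fin d), ‖φ.symm x - φ.symm y‖ ≤ K₂ * ‖x - y‖)
    (a : ℕ) (ha : 2 ≤ a) (ε : ℝ)
    (hsmall : ∀ (x : EuclideanSpace ℝ (Fin d)) (s : Multiset (EuclideanSpace ℝ (Fin d))),
      (x ::ₘ s).card ≤ a →
      ‖φ.symm (((x ::ₘ s).map φ).sum) - Multiset.fold op x s‖ < ε) :
    ∀ (x : EuclideanSpace ℝ (Fin d)) (s : Multiset (EuclideanSpace ℝ (Fin d))) (b : ℕ),
      (x ::ₘ s).card = b → a ≤ b →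
      ‖φ.symm (((x ::ₘ s).map φ).sum) - Multiset.fold op x s‖ <
        ε * (((a : ℝ) * K₁ * K₂) ^ (⌈Real.logb a b⌉ : ℤ) - 1) / ((a : ℝ) * K₁ * K₂ - 1) := by
  intro x s b hb hab
  have hC : 1 < (a : ℝ) * K₁ * K₂ := by
    have : (2 : ℝ) ≤ a := by exact_mod_cast ha
    nlinarith
  have hε : 0 < ε := (norm_nonneg _).trans_lt (hsmall x 0 (by simp; omega))
  obtain ⟨n, hn⟩ := Nat.exists_eq_add_one.2 (Nat.clog_pos (b := a) (n := b) (by omega) (by omega))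
  have hlog : ⌈Real.logb a b⌉ = ((n + 1 : ℕ) : ℤ) := by
    rw [Real.ceil_logb_natCast (by positivity), Int.clog_natCast, hn]
  rw [hlog, zpow_natCast, mul_div_assoc, ← geom_sum_eq hC.ne']
  -- only a nontrivial space forces `0 ≤ K₁` and `0 ≤ K₂`
  rcases subsingleton_or_nontrivial (EuclideanSpace ℝ (Fin d)) with _ | _
  · rw [Subsingleton.elim (φ.symm _) (Multiset.fold op x s), sub_self, norm_zero]
    exact mul_pos hε (geom_sum_pos (by linarith) n.succ_ne_zero)
  · refine norm_symm_sum_sub_lt_of_card_le_pow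
      (pos_of_norm_sub_le_mul_norm_sub φ.injective hφ).le
      (pos_of_norm_sub_le_mul_norm_sub φ.symm.injective hφinv).le hε.le hφ hφinv ?_ n
      (by rw [hb, ← hn]; exact Nat.le_pow_clog (by omega) b) (Multiset.foldOption_cons op x s)
    intro S y hS hy
    obtain ⟨x, s, rfl, rfl⟩ := (Multiset.foldOption_eq_some_iff op).1 hy
    exact hsmall x s hS
end
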